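/- arXiv:2408.02422 — 2 statements merged into one kernel-verified Lean document; each statement's English description precedes it below -/
import Mathlib

section
/- For all natural numbers k ≤ p, the inequality (2p)! / ((p−1)! · k! · (p−k+1)!) ≤ 9^p holds. -/
lemma choose_le_two_pow' (n k : ℕ) : n.choose k ≤ 2 ^ n := by
  rcases le_or_gt k n with h | h
  · calc n.choose k ≤ ∑ i ∈ Finset.range (n + 1), n.choose i :=
        Finset.single_le_sum (fun _ _ => Nat.zero_le _) (Finset.mem_range.mpr (by omega))
      _ = 2 ^ n := Nat.sum_range_choose n
  · rw [Nat.choose_eq_zero_of_lt h]; exact Nat.zero_le _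

lemma two_mul_eight_pow_le (p : ℕ) (hp : 6 ≤ p) : 2 * 8 ^ p ≤ 9 ^ p := by
  induction p with
  | zero => omega
  | succ n ih =>
    rcases Nat.lt_or_ge n 6 with h | h
    · interval_cases n <;> first | omega | norm_num
    · have h8 := ih h
      calc 2 * 8 ^ (n + 1) = 8 * (2 * 8 ^ n) := by ring
        _ ≤ 8 * 9 ^ n := Nat.mul_le_mul_left _ h8
        _ ≤ 9 * 9 ^ n := Nat.mul_le_mul_right _ (by norm_num)
        _ = 9 ^ (n + 1) := by ring

theorem factorial_quotient_le_nine_pow (p k : ℕ) (hp : 1 ≤ p) (hk : k ≤ p) :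
    ((2 * p).factorial : ℝ) /
        (((p - 1).factorial : ℝ) * (k.factorial : ℝ) * ((p - k + 1).factorial : ℝ)) ≤
      9 ^ p := by
  have hkey : (2 * p).choose (p - 1) * (p + 1).choose k ≤ 9 ^ p := by
    rcases Nat.lt_or_ge p 6 with h | h
    · interval_cases p <;> interval_cases k <;> decide
    · calc (2 * p).choose (p - 1) * (p + 1).choose k
          ≤ 2 ^ (2 * p) * 2 ^ (p + 1) :=
            Nat.mul_le_mul (choose_le_two_pow' _ _) (choose_le_two_pow' _ _)
        _ = 2 * 8 ^ p := by rw [show (8:ℕ) = 2 ^ 3 from rfl, ← pow_mul]; ring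
        _ ≤ 9 ^ p := two_mul_eight_pow_le p h
  have e1 : (2 * p).choose (p - 1) * (p - 1).factorial * (p + 1).factorial
      = (2 * p).factorial := by
    have := Nat.choose_mul_factorial_mul_factorial (show p - 1 ≤ 2 * p by omega)
    rwa [show 2 * p - (p - 1) = p + 1 by omega] at this
  have e2 : (p + 1).choose k * k.factorial * (p - k + 1).factorial
      = (p + 1).factorial := by
    have := Nat.choose_mul_factorial_mul_factorial (show k ≤ p + 1 by omega)
    rwa [show p + 1 - k = p - k + 1 by omega] at this
  have efac : (2 * p).factorial =
      ((2 * p).choose (p - 1) * (p + 1).choose k) *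
        ((p - 1).factorial * k.factorial * (p - k + 1).factorial) := by
    rw [← e1, ← e2]; ring
  have hD : (0 : ℝ) < ((p - 1).factorial : ℝ) * (k.factorial : ℝ) * ((p - k + 1).factorial : ℝ) := by
    positivity
  rw [div_le_iff₀ hD]
  push_cast [efac]
  calc ((2 * p).choose (p - 1) : ℝ) * ((p + 1).choose k) *
        (((p - 1).factorial : ℝ) * k.factorial * ((p - k + 1).factorial : ℝ))
      ≤ (9 : ℝ) ^ p * (((p - 1).factorial : ℝ) * k.factorial * ((p - k + 1).factorial : ℝ)) := by
        have : ((2 * p).choose (p - 1) : ℝ) * ((p + 1).choose k) ≤ (9 : ℝ) ^ p := by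
          exact_mod_cast hkey
        exact mul_le_mul_of_nonneg_right this hD.le
    _ = 9 ^ p * (((p - 1).factorial : ℝ) * k.factorial * ((p - k + 1).factorial : ℝ)) := by ring
end

section
/- For multi-indices m, p ∈ ℕ₀^n with m ≥ p, the product ∏_{j=1}^n m_j(m_j+1)···(m_j+p_j−1) is bounded by (2|p|)!/(|p|−1)! whenever |p| ≥ 1 and each m_j ≤ |p|. -/
open Finset

private lemma asc_eq_prod (a : ℕ) : ∀ k, (Nat.ascFactorial a k : ℝ) = ∏ i ∈ range k, ((a : ℝ) + i)
  | 0 => by simp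
  | k + 1 => by
    rw [Nat.ascFactorial_succ, prod_range_succ, ← asc_eq_prod a k]
    push_cast; ring

private lemma prod_prod_le (a : ℕ) : ∀ (n : ℕ) (p : Fin n → ℕ),
    (∏ j, ∏ i ∈ range (p j), ((a : ℝ) + i)) ≤ ∏ k ∈ range (∑ j, p j), ((a : ℝ) + k)
  | 0, p => by simp
  | n + 1, p => by
    rw [Fin.prod_univ_succ, Fin.sum_univ_succ, prod_range_add]
    have h1 := prod_prod_le a n (fun j => p j.succ)
    have hnn : ∀ (s : Finset ℕ), (0:ℝ) ≤ ∏ k ∈ s, ((a : ℝ) + k) := fun s =>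
      prod_nonneg fun i _ => by positivity
    calc (∏ i ∈ range (p 0), ((a : ℝ) + i)) * ∏ j : Fin n, ∏ i ∈ range (p j.succ), ((a : ℝ) + i)
        ≤ (∏ i ∈ range (p 0), ((a : ℝ) + i)) * ∏ k ∈ range (∑ j : Fin n, p j.succ), ((a : ℝ) + k) := by
          exact mul_le_mul_of_nonneg_left h1 (hnn _)
      _ ≤ (∏ i ∈ range (p 0), ((a : ℝ) + i)) *
            ∏ k ∈ range (∑ j : Fin n, p j.succ), ((a : ℝ) + (p 0 + k)) := by
          apply mul_le_mul_of_nonneg_left _ (hnn _)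
          apply prod_le_prod (fun i _ => by positivity)
          intro i _
          push_cast
          linarith [Nat.cast_nonneg (α := ℝ) (p 0)]
      _ = _ := by
          congr 1
          apply prod_congr rfl
          intro i _
          push_cast; ring

theorem rising_factorial_prod_le (n : ℕ) (m p : Fin n → ℕ)
    (hp : 1 ≤ ∑ j, p j) (hm : ∀ j, m j ≤ ∑ j, p j) :
    (∏ j, ∏ i ∈ Finset.range (p j), ((m j : ℝ) + i)) ≤
      ((2 * ∑ j, p j).factorial : ℝ) / (((∑ j, p j) - 1).factorial : ℝ) := by
  set P := ∑ j, p j with hP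
  have step1 : (∏ j, ∏ i ∈ range (p j), ((m j : ℝ) + i)) ≤
      ∏ j, ∏ i ∈ range (p j), ((P : ℝ) + i) := by
    apply prod_le_prod (fun j _ => prod_nonneg fun i _ => by positivity)
    intro j _
    apply prod_le_prod (fun i _ => by positivity)
    intro i _
    have := hm j
    have : (m j : ℝ) ≤ (P : ℝ) := by exact_mod_cast this
    linarith
  have step2 := prod_prod_le P n p
  have step3 : (∏ k ∈ range P, ((P : ℝ) + k)) = (Nat.ascFactorial P P : ℝ) :=
    (asc_eq_prod P P).symm
  have key : (P - 1).factorial * Nat.ascFactorial P P = (P + P - 1).factorial :=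
    Nat.factorial_mul_ascFactorial' P P hp
  have hle : (P + P - 1).factorial ≤ (2 * P).factorial :=
    Nat.factorial_le (by omega)
  rw [le_div_iff₀ (by positivity)]
  calc (∏ j, ∏ i ∈ range (p j), ((m j : ℝ) + i)) * ((P - 1).factorial : ℝ)
      ≤ (Nat.ascFactorial P P : ℝ) * ((P - 1).factorial : ℝ) := by
        apply mul_le_mul_of_nonneg_right _ (by positivity)
        exact le_trans step1 (step2.trans_eq step3)
    _ = ((P + P - 1).factorial : ℝ) := by rw [mul_comm]; exact_mod_cast congrArg (Nat.cast (R := ℝ)) key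
    _ ≤ ((2 * P).factorial : ℝ) := by exact_mod_cast hle
end
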